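/- Let k be a field with char(k) ≠ 2 and R = k[x,y]. Let G be the 3-cycle with edges v_1v_2, v_2v_3, v_3v_1 labeled x², y², (x+y)² respectively. Then the spline module R_G has no flow-up class basis, i.e., there is no basis of the form B_1 = (1,1,1), B_2 = (0,f,g), B_3 = (0,0,h). -/

import Mathlib

/-- The module of generalized splines on the 3-cycle with edges `v₁v₂, v₂v₃, v₃v₁`
labeled `a, b, c` respectively. -/
def cycleSpline {R : Type*} [CommRing R] (a b c : R) : Submodule R (Fin 3 → R) where
  carrier := {F | a ∣ F 0 - F 1 ∧ b ∣ F 1 - F 2 ∧ c ∣ F 2 - F 0}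
  add_mem' := by
    rintro x y ⟨hx1, hx2, hx3⟩ ⟨hy1, hy2, hy3⟩
    exact ⟨by simpa [add_sub_add_comm] using dvd_add hx1 hy1,
           by simpa [add_sub_add_comm] using dvd_add hx2 hy2,
           by simpa [add_sub_add_comm] using dvd_add hx3 hy3⟩
  zero_mem' := by simp
  smul_mem' := by
    rintro r x ⟨hx1, hx2, hx3⟩
    exact ⟨by simpa [Pi.smul_apply, smul_eq_mul, ← mul_sub] using hx1.mul_left r,
           by simpa [Pi.smul_apply, smul_eq_mul, ← mul_sub] using hx2.mul_left r,
           by simpa [Pi.smul_apply, smul_eq_mul, ← mul_sub] using hx3.mul_left r⟩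

lemma mem_cycleSpline' {R : Type*} [CommRing R] {a b c : R} {F : Fin 3 → R} :
    F ∈ cycleSpline a b c ↔ a ∣ F 0 - F 1 ∧ b ∣ F 1 - F 2 ∧ c ∣ F 2 - F 0 := Iff.rfl

section Aux

variable {R : Type*} [CommRing R] [IsDomain R]

/-- The two "upper flow-up" splines used throughout. -/
private lemma w1_mem (x y : R) :
    (![0, x^2*(x+2*y), x*(x+y)^2] : Fin 3 → R) ∈ cycleSpline (x^2) (y^2) ((x+y)^2) := by
  refine ⟨⟨-(x+2*y), ?_⟩, ⟨-x, ?_⟩, ⟨x, ?_⟩⟩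
  · show (0:R) - x^2*(x+2*y) = x^2 * -(x+2*y)
    ring
  · show x^2*(x+2*y) - x*(x+y)^2 = y^2 * -x
    ring
  · show x*(x+y)^2 - 0 = (x+y)^2 * x
    ring

private lemma w2_mem (x y : R) :
    (![0, x^2*y, y*(x+y)^2] : Fin 3 → R) ∈ cycleSpline (x^2) (y^2) ((x+y)^2) := by
  refine ⟨⟨-y, ?_⟩, ⟨-(2*x+y), ?_⟩, ⟨y, ?_⟩⟩
  · show (0:R) - x^2*y = x^2 * -y
    ring
  · show x^2*y - y*(x+y)^2 = y^2 * -(2*x+y)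
    ring
  · show y*(x+y)^2 - 0 = (x+y)^2 * y
    ring

private lemma basic_facts (x y u : R) (hu : 2 * u = 1) (hyp : Prime y) (hyx : ¬ y ∣ x) :
    (2 : R) ≠ 0 ∧ x ≠ 0 ∧ y ≠ 0 ∧ x + y ≠ 0 ∧ ¬ y ∣ (x + y) := by
  have h2 : (2 : R) ≠ 0 := by
    intro h
    rw [h, zero_mul] at hu
    exact zero_ne_one hu
  have hx0 : x ≠ 0 := fun h => hyx (h ▸ dvd_zero y)
  have hy0 : y ≠ 0 := hyp.ne_zero
  have hyxy : ¬ y ∣ (x + y) := by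
    intro h
    exact hyx (by simpa using dvd_sub h (dvd_refl y))
  have hxy0 : x + y ≠ 0 := fun h => hyxy (h ▸ dvd_zero y)
  exact ⟨h2, hx0, hy0, hxy0, hyxy⟩

/-- Every spline is a combination of `(1,1,1)`, `w1`, `w2`. -/
private lemma spline_decomp (x y u : R) (hu : 2 * u = 1) (hyp : Prime y) (hyx : ¬ y ∣ x)
    {F : Fin 3 → R} (hF : F ∈ cycleSpline (x^2) (y^2) ((x+y)^2)) :
    ∃ c : Fin 3 → R,
      F = c 0 • (![1,1,1] : Fin 3 → R) + c 1 • ![0, x^2*(x+2*y), x*(x+y)^2]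
        + c 2 • ![0, x^2*y, y*(x+y)^2] := by
  obtain ⟨h2, hx0, hy0, hxy0, hyxy⟩ := basic_facts x y u hu hyp hyx
  obtain ⟨⟨p', hp'⟩, ⟨q, hq⟩, ⟨r, hr⟩⟩ := hF
  -- F 1 = F 0 + x^2 * p with p := -p'
  set p : R := -p' with hpdef
  have hp : F 1 = F 0 + x^2 * p := by rw [hpdef]; linear_combination -hp'
  have hr2 : F 2 = F 0 + (x+y)^2 * r := by linear_combination hr
  -- step 1 : y ∣ p - r
  have hdvd1 : y ∣ x * (x * (p - r)) := ⟨y*q + (2*x+y)*r, by linear_combination hq - hp + hr2⟩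
  have hs' : y ∣ p - r := by
    rcases (hyp.dvd_mul.mp hdvd1) with h | h
    · exact absurd h hyx
    rcases (hyp.dvd_mul.mp h) with h' | h'
    · exact absurd h' hyx
    exact h'
  obtain ⟨s, hs⟩ := hs'
  -- step 2 : y ∣ x*s - 2*r
  have hdvd2 : y ∣ x * (x*s - 2*r) := by
    have hcan : y * (x * (x*s - 2*r)) = y * (y*(q + r)) := by
      linear_combination hq - hp + hr2 - x^2 * hs
    exact ⟨q + r, mul_left_cancel₀ hy0 hcan⟩
  have ht' : y ∣ x*s - 2*r := by
    rcases (hyp.dvd_mul.mp hdvd2) with h | h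
    · exact absurd h hyx
    exact h
  obtain ⟨t, ht⟩ := ht'
  -- express p and r
  have hrel : r = u * (x*s - y*t) := by
    calc r = (2*u) * r := by rw [hu, one_mul]
    _ = u * (2*r) := by ring
    _ = u * (x*s - y*t) := by rw [show 2*r = x*s - y*t by linear_combination -ht]
  have hpe : p = u * (x*s - y*t) + y*s := by rw [← hrel]; linear_combination hs
  refine ⟨![F 0, u * s, -(u * t)], ?_⟩
  funext i
  fin_cases i
  · show F 0 = F 0 * 1 + u * s * 0 + -(u * t) * 0
    ring
  · show F 1 = F 0 * 1 + u * s * (x^2*(x+2*y)) + -(u * t) * (x^2*y)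
    rw [hp, hpe]
    linear_combination (-(x^2*y*s)) * hu
  · show F 2 = F 0 * 1 + u * s * (x*(x+y)^2) + -(u * t) * (y*(x+y)^2)
    rw [hr2, hrel]
    ring

private lemma w_linearIndependent (x y u : R) (hu : 2 * u = 1) (hyp : Prime y)
    (hyx : ¬ y ∣ x) :
    LinearIndependent R
      (![![1,1,1], ![0, x^2*(x+2*y), x*(x+y)^2], ![0, x^2*y, y*(x+y)^2]] :
        Fin 3 → Fin 3 → R) := by
  obtain ⟨h2, hx0, hy0, hxy0, hyxy⟩ := basic_facts x y u hu hyp hyx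
  rw [Fintype.linearIndependent_iff]
  intro g hg
  have e0 := congrFun hg 0
  have e1 := congrFun hg 1
  have e2 := congrFun hg 2
  simp only [Fin.sum_univ_three, Fin.isValue, Pi.add_apply, Pi.smul_apply, smul_eq_mul,
    Matrix.cons_val_zero, Matrix.cons_val_one, Matrix.head_cons,
    Matrix.cons_val_two, Matrix.tail_cons, Pi.zero_apply] at e0 e1 e2
  -- e0 : g 0 = 0
  have hg0 : g 0 = 0 := by linear_combination e0
  have eA : x^2 * (g 1 * (x+2*y) + g 2 * y) = x^2 * 0 := by
    linear_combination e1 - e0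
  have eB : (x+y)^2 * (g 1 * x + g 2 * y) = (x+y)^2 * 0 := by
    linear_combination e2 - e0
  have hA := mul_left_cancel₀ (pow_ne_zero 2 hx0) eA
  have hB := mul_left_cancel₀ (pow_ne_zero 2 hxy0) eB
  have h1 : (2 * y) * g 1 = (2 * y) * 0 := by linear_combination hA - hB
  have hg1 : g 1 = 0 := mul_left_cancel₀ (mul_ne_zero h2 hy0) h1
  have h2' : y * g 2 = y * 0 := by linear_combination hB - x * hg1
  have hg2 : g 2 = 0 := mul_left_cancel₀ hy0 h2'
  intro i
  fin_cases i <;> assumption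

private theorem auxFree (x y u : R) (hu : 2 * u = 1) (hyp : Prime y) (hyx : ¬ y ∣ x) :
    Module.Free R ↥(cycleSpline (x^2) (y^2) ((x+y)^2)) := by
  set M := cycleSpline (x^2) (y^2) ((x+y)^2) with hM
  set w : Fin 3 → Fin 3 → R :=
    ![![1,1,1], ![0, x^2*(x+2*y), x*(x+y)^2], ![0, x^2*y, y*(x+y)^2]] with hw
  have hmem : ∀ i, w i ∈ M := by
    intro i
    fin_cases i
    · refine ⟨⟨0, ?_⟩, ⟨0, ?_⟩, ⟨0, ?_⟩⟩
      · show (1:R) - 1 = x^2 * 0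
        ring
      · show (1:R) - 1 = y^2 * 0
        ring
      · show (1:R) - 1 = (x+y)^2 * 0
        ring
    · exact w1_mem x y
    · exact w2_mem x y
  let v : Fin 3 → ↥M := fun i => ⟨w i, hmem i⟩
  have hvw : M.subtype ∘ v = w := rfl
  have hliw : LinearIndependent R w := w_linearIndependent x y u hu hyp hyx
  have hliv : LinearIndependent R v :=
    LinearIndependent.of_comp M.subtype (by rw [hvw]; exact hliw)
  have htop : ⊤ ≤ Submodule.span R (Set.range v) := by
    rintro ⟨F, hF⟩ -
    obtain ⟨c, hc⟩ := spline_decomp x y u hu hyp hyx hF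
    have hsum : (⟨F, hF⟩ : ↥M) = c 0 • v 0 + c 1 • v 1 + c 2 • v 2 := by
      apply Subtype.ext
      simp only [Submodule.coe_add, SetLike.val_smul]
      exact hc
    rw [hsum]
    have h0 : v 0 ∈ Submodule.span R (Set.range v) := Submodule.subset_span ⟨0, rfl⟩
    have h1 : v 1 ∈ Submodule.span R (Set.range v) := Submodule.subset_span ⟨1, rfl⟩
    have h2 : v 2 ∈ Submodule.span R (Set.range v) := Submodule.subset_span ⟨2, rfl⟩
    exact Submodule.add_mem _ (Submodule.add_mem _ (Submodule.smul_mem _ _ h0)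
      (Submodule.smul_mem _ _ h1)) (Submodule.smul_mem _ _ h2)
  exact Module.Free.of_basis (Module.Basis.mk hliv htop)

private theorem auxNoFlow {F : Type*} [Field F] (x y u : R) (hu : 2 * u = 1)
    (hyp : Prime y) (hyx : ¬ y ∣ x)
    (φ : R →+* F) (hφx : φ x = 0) (hφy : φ y = 0) (hφ2 : (2 : F) ≠ 0) :
    ¬ ∃ B : Fin 3 → Fin 3 → R,
        (∀ i, B i ∈ cycleSpline (x ^ 2) (y ^ 2) ((x + y) ^ 2)) ∧
        (∀ i j, j < i → B i j = 0) ∧ (∀ i, B i i ≠ 0) ∧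
        LinearIndependent R B ∧
        Submodule.span R (Set.range B) = cycleSpline (x ^ 2) (y ^ 2) ((x + y) ^ 2) := by
  obtain ⟨h2, hx0, hy0, hxy0, hyxy⟩ := basic_facts x y u hu hyp hyx
  rintro ⟨B, hBmem, hlow, hdiag, -, hspan⟩
  have hB10 : B 1 0 = 0 := hlow 1 0 (by decide)
  have hB20 : B 2 0 = 0 := hlow 2 0 (by decide)
  have hB21 : B 2 1 = 0 := hlow 2 1 (by decide)
  -- spline conditions
  obtain ⟨hf', hg', _⟩ := hBmem 1
  obtain ⟨_, hh1', hh2'⟩ := hBmem 2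
  -- x^2 ∣ B 1 1
  have hfdvd : x^2 ∣ B 1 1 := by
    rw [hB10, zero_sub] at hf'
    exact (dvd_neg).mp hf'
  obtain ⟨f₁, hf₁⟩ := hfdvd
  -- (x+y)^2 ∣ B 1 2
  have hgdvd : (x+y)^2 ∣ B 1 2 := by
    obtain ⟨_, hg2', hg3'⟩ := hBmem 1
    rw [hB10, sub_zero] at hg3'
    exact hg3'
  obtain ⟨g₁, hg₁⟩ := hgdvd
  -- y^2 ∣ B 2 2 and (x+y)^2 ∣ B 2 2
  have hhy : y^2 ∣ B 2 2 := by
    rw [hB21, zero_sub] at hh1'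
    exact (dvd_neg).mp hh1'
  have hhxy : (x+y)^2 ∣ B 2 2 := by rwa [hB20, sub_zero] at hh2'
  obtain ⟨h₁, hh₁⟩ := hhxy
  -- y^2 ∣ (x+y)^2 * h₁ hence h₁ = y^2 * m
  have hnd : ¬ y ∣ (x+y)^2 := by
    intro h
    rcases hyp.dvd_mul.mp (by rwa [sq] at h) with h' | h' <;> exact hyxy h'
  obtain ⟨k', hk'⟩ := hhy
  have hydvd1 : y ∣ (x+y)^2 * h₁ := by
    refine ⟨y * k', ?_⟩
    rw [← hh₁, hk']; ring
  have hh₁y : y ∣ h₁ := (hyp.dvd_mul.mp hydvd1).resolve_left hnd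
  obtain ⟨h₂, hh₂⟩ := hh₁y
  have hcancel : y * ((x+y)^2 * h₂) = y * (y * k') := by
    have : (x+y)^2 * (y * h₂) = y^2 * k' := by rw [← hh₂, ← hh₁, hk']
    linear_combination this
  have hydvd2 : y ∣ (x+y)^2 * h₂ := ⟨k', mul_left_cancel₀ hy0 hcancel⟩
  have hh₂y : y ∣ h₂ := (hyp.dvd_mul.mp hydvd2).resolve_left hnd
  obtain ⟨m, hm⟩ := hh₂y
  have hhm : B 2 2 = (x+y)^2 * (y^2 * m) := by rw [hh₁, hh₂, hm]; ring
  -- expand the two auxiliary splines in the spanning family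
  have hW1 : (![0, x^2*(x+2*y), x*(x+y)^2] : Fin 3 → R) ∈ Submodule.span R (Set.range B) :=
    hspan ▸ w1_mem x y
  have hW2 : (![0, x^2*y, y*(x+y)^2] : Fin 3 → R) ∈ Submodule.span R (Set.range B) :=
    hspan ▸ w2_mem x y
  obtain ⟨c, hc⟩ := Submodule.mem_span_range_iff_exists_fun R |>.mp hW1
  obtain ⟨d, hd⟩ := Submodule.mem_span_range_iff_exists_fun R |>.mp hW2
  have hc0e := congrFun hc 0
  have hc1e := congrFun hc 1
  have hc2e := congrFun hc 2
  have hd0e := congrFun hd 0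
  have hd1e := congrFun hd 1
  have hd2e := congrFun hd 2
  simp only [Fin.sum_univ_three, Fin.isValue, Pi.add_apply, Pi.smul_apply, smul_eq_mul,
    Matrix.cons_val_zero, Matrix.cons_val_one, Matrix.head_cons,
    Matrix.cons_val_two, Matrix.tail_cons, hB10, hB20, hB21, mul_zero, add_zero,
    zero_add] at hc0e hc1e hc2e hd0e hd1e hd2e
  -- first coordinates force the coefficient of B 0 to vanish
  have hc0 : c 0 = 0 := by
    rcases mul_eq_zero.mp hc0e with h | h
    · exact h
    · exact absurd h (hdiag 0)
  have hd0 : d 0 = 0 := by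
    rcases mul_eq_zero.mp hd0e with h | h
    · exact h
    · exact absurd h (hdiag 0)
  rw [hc0, zero_mul, zero_add] at hc1e hc2e
  rw [hd0, zero_mul, zero_add] at hd1e hd2e
  -- cancel x^2 in the middle coordinates
  have hc1f : c 1 * f₁ = x + 2*y := by
    have : x^2 * (c 1 * f₁) = x^2 * (x + 2*y) := by
      rw [hf₁] at hc1e; linear_combination hc1e
    exact mul_left_cancel₀ (pow_ne_zero 2 hx0) this
  have hd1f : d 1 * f₁ = y := by
    have : x^2 * (d 1 * f₁) = x^2 * y := by
      rw [hf₁] at hd1e; linear_combination hd1e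
    exact mul_left_cancel₀ (pow_ne_zero 2 hx0) this
  -- cancel (x+y)^2 in the last coordinates
  have hI : c 1 * g₁ + c 2 * (y^2*m) = x := by
    have : (x+y)^2 * (c 1 * g₁ + c 2 * (y^2*m)) = (x+y)^2 * x := by
      rw [hg₁, hhm] at hc2e; linear_combination hc2e
    exact mul_left_cancel₀ (pow_ne_zero 2 hxy0) this
  have hII : d 1 * g₁ + d 2 * (y^2*m) = y := by
    have : (x+y)^2 * (d 1 * g₁ + d 2 * (y^2*m)) = (x+y)^2 * y := by
      rw [hg₁, hhm] at hd2e; linear_combination hd2e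
    exact mul_left_cancel₀ (pow_ne_zero 2 hxy0) this
  -- f₁ is a unit
  set W : R := c 2 * d 1 - d 2 * c 1 with hWdef
  have key : y^2 * (f₁ * (m * W)) = y^2 * (-2) := by
    rw [hWdef]
    linear_combination (f₁ * d 1) * hI - (f₁ * c 1) * hII + x * hd1f - y * hc1f
  have key2 : f₁ * (m * W) = -2 := mul_left_cancel₀ (pow_ne_zero 2 hy0) key
  set e : R := -(u * (m * W)) with hedef
  have hfe : f₁ * e = 1 := by
    rw [hedef]
    linear_combination (-u) * key2 + hu
  have hc1v : c 1 = (x + 2*y) * e := by linear_combination e * hc1f - c 1 * hfe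
  have hd1v : d 1 = y * e := by linear_combination e * hd1f - d 1 * hfe
  -- from hII : e * g₁ + d 2 * y * m = 1
  have hII2 : e * g₁ + d 2 * (y*m) = 1 := by
    have : y * (e * g₁ + d 2 * (y*m)) = y * 1 := by
      rw [hd1v] at hII; linear_combination hII
    exact mul_left_cancel₀ hy0 this
  -- final equation
  have hfin : (x + 2*y) * (d 2 * m) - y * (c 2 * m) = 2 := by
    have : y * ((x + 2*y) * (d 2 * m) - y * (c 2 * m)) = y * 2 := by
      rw [hc1v] at hI
      linear_combination -hI + (x + 2*y) * hII2
    exact mul_left_cancel₀ hy0 this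
  have h0 : φ ((x + 2*y) * (d 2 * m) - y * (c 2 * m)) = 0 := by
    simp [hφx, hφy]
  rw [hfin] at h0
  apply hφ2
  rw [map_ofNat] at h0
  exact h0

end Aux

private lemma primeX1 {k : Type*} [Field k] : Prime (MvPolynomial.X 1 : MvPolynomial (Fin 2) k) := by
  open MvPolynomial in
  rw [← MulEquiv.prime_iff (finSuccEquiv k 1).toMulEquiv]
  have h1 : ((finSuccEquiv k 1).toMulEquiv (X 1) : Polynomial (MvPolynomial (Fin 1) k))
      = Polynomial.C (X 0) := by
    show (finSuccEquiv k 1) (X 1) = _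
    have : (1 : Fin 2) = Fin.succ 0 := rfl
    rw [this, finSuccEquiv_X_succ]
  rw [h1, Polynomial.prime_C_iff]
  rw [← MulEquiv.prime_iff (finSuccEquiv k 0).toMulEquiv]
  have h2 : ((finSuccEquiv k 0).toMulEquiv (X 0) : Polynomial (MvPolynomial (Fin 0) k))
      = Polynomial.X := by
    show (finSuccEquiv k 0) (X 0) = _
    rw [finSuccEquiv_X_zero]
  rw [h2]
  exact Polynomial.prime_X

/-- Over `R = k[x,y]` with `char k ≠ 2`, the spline module on the 3-cycle with edge
labels `x², y², (x+y)²` is free but has no flow-up class basis. -/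
theorem stmt18 {k : Type*} [Field k] (hchar : (2 : k) ≠ 0)
    (x y : MvPolynomial (Fin 2) k)
    (hx : x = MvPolynomial.X 0) (hy : y = MvPolynomial.X 1) :
    Module.Free (MvPolynomial (Fin 2) k)
      ↥(cycleSpline (x ^ 2) (y ^ 2) ((x + y) ^ 2)) ∧
    ¬ ∃ B : Fin 3 → Fin 3 → MvPolynomial (Fin 2) k,
        (∀ i, B i ∈ cycleSpline (x ^ 2) (y ^ 2) ((x + y) ^ 2)) ∧
        (∀ i j, j < i → B i j = 0) ∧ (∀ i, B i i ≠ 0) ∧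
        LinearIndependent (MvPolynomial (Fin 2) k) B ∧
        Submodule.span (MvPolynomial (Fin 2) k) (Set.range B)
          = cycleSpline (x ^ 2) (y ^ 2) ((x + y) ^ 2) := by
  subst hx hy
  have hu : (2 : MvPolynomial (Fin 2) k) * MvPolynomial.C ((2:k)⁻¹) = 1 := by
    have h : (2 : MvPolynomial (Fin 2) k) = MvPolynomial.C (2:k) :=
      (map_ofNat (MvPolynomial.C : k →+* MvPolynomial (Fin 2) k) 2).symm
    rw [h, ← map_mul, mul_inv_cancel₀ hchar, map_one]
  have hyp : Prime (MvPolynomial.X 1 : MvPolynomial (Fin 2) k) := primeX1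
  have hyx : ¬ (MvPolynomial.X 1 : MvPolynomial (Fin 2) k) ∣ MvPolynomial.X 0 := by simp
  refine ⟨auxFree _ _ _ hu hyp hyx, ?_⟩
  have h1 : (MvPolynomial.eval (fun _ => (0:k))) (MvPolynomial.X 0 : MvPolynomial (Fin 2) k) = 0 := by
    simp
  have h2 : (MvPolynomial.eval (fun _ => (0:k))) (MvPolynomial.X 1 : MvPolynomial (Fin 2) k) = 0 := by
    simp
  exact auxNoFlow _ _ _ hu hyp hyx (MvPolynomial.eval (fun _ => (0:k))) h1 h2 hchar
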